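/- Projective elements of the Tamari poset are multiplicative for the over product: P(x/y) = P(x)/P(y), where P(t) is the sum of all trees ≤ t and the over product of two sums is defined by applying / to pairs of terms. -/

import Mathlib

/-- Planar binary trees: a leaf `∘` or an ordered pair of planar binary trees. -/
inductive PBT : Type
  | leaf : PBT
  | node : PBT → PBT → PBT
deriving DecidableEq

namespace PBT

/-- The degree: the number of internal vertices. -/
def deg : PBT → ℕ
  | leaf => 0
  | node l r => deg l + deg r + 1

/-- The over product `x/y`: graft the root of `x` onto the leftmost leaf of `y`. -/
def overProd (x : PBT) : PBT → PBT
  | leaf => x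
  | node l r => node (overProd x l) r

/-- The under product `x\y`: graft the root of `y` onto the rightmost leaf of `x`. -/
def under : PBT → PBT → PBT
  | leaf, y => y
  | node l r, y => node l (under r y)

/-- Left-right reversal: swap the two subtrees at every internal vertex. -/
def rev : PBT → PBT
  | leaf => leaf
  | node l r => node (rev r) (rev l)

/-- `move x y` : `y` is obtained from `x` by one elementary Tamari move,
replacing a subtree `(a (b c))` by `((a b) c)` (a right rotation, going down). -/
inductive move : PBT → PBT → Prop
  | rot (a b c : PBT) : move (node a (node b c)) (node (node a b) c)
  | left {a a' : PBT} (b : PBT) : move a a' → move (node a b) (node a' b)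
  | right (a : PBT) {b b' : PBT} : move b b' → move (node a b) (node a b')

/-- The Tamari order: `x ≤ y` iff `x` is obtained from `y` by a sequence of
elementary moves. -/
def tle (x y : PBT) : Prop := Relation.ReflTransGen move y x

/-- The left comb of degree `n`. -/
def leftComb : ℕ → PBT
  | 0 => leaf
  | n+1 => node (leftComb n) leaf

/-- The right comb of degree `n`. -/
def rightComb : ℕ → PBT
  | 0 => leaf
  | n+1 => node leaf (rightComb n)

end PBT

/-!
The tree `x/y` is `y` with `x` hanging from its leftmost leaf, and a Tamari move on `x/y`
never mixes the two parts: it is either a move inside `x`, or a move of `y` in which the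
subtree `x` travels along as if it were a leaf. Hence the trees below `x/y` are exactly the
`a/b` with `a ≤ x` and `b ≤ y`. The factorisation is unique because the degree of `b` is that
of `y`, and the degree of the lower factor fixes where the upper one is grafted.
-/

namespace PBT

lemma move.deg_eq {x y : PBT} (h : move x y) : x.deg = y.deg := by
  induction h with
  | rot a b c => simp only [deg]; ring
  | left b _ ih => simp only [deg, ih]
  | right a _ ih => simp only [deg, ih]

lemma tle.deg_eq {x y : PBT} (h : tle x y) : x.deg = y.deg := by
  induction h with
  | refl => rfl
  | tail _ hm ih => rw [← hm.deg_eq, ih]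

lemma move.overProd_right {a a' : PBT} (h : move a a') : ∀ b, move (a.overProd b) (a'.overProd b)
  | leaf => h
  | node l r => .left r (h.overProd_right l)

lemma move.overProd_left (a : PBT) {b b' : PBT} (h : move b b') :
    move (a.overProd b) (a.overProd b') := by
  induction h with
  | rot p q r => exact .rot (a.overProd p) q r
  | left c _ ih => exact .left c ih
  | right p hm _ => exact .right (a.overProd p) hm

lemma tle.overProd {a b x y : PBT} (ha : tle a x) (hb : tle b y) :
    tle (a.overProd b) (x.overProd y) :=
  have hx : tle (a.overProd y) (x.overProd y) :=
    ha.lift (fun t : PBT => t.overProd y) fun _ _ h => h.overProd_right y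
  have hy : tle (a.overProd b) (a.overProd y) :=
    hb.lift (fun t : PBT => a.overProd t) fun _ _ h => h.overProd_left a
  Relation.ReflTransGen.trans hx hy

lemma move_overProd_cases : ∀ {a b z : PBT}, move (a.overProd b) z →
    (∃ a', move a a' ∧ z = a'.overProd b) ∨ (∃ b', move b b' ∧ z = a.overProd b')
  | _, leaf, _, h => .inl ⟨_, h, rfl⟩
  | a, node l r, _, h => by
    cases h with
    | rot _ q s => exact .inr ⟨_, .rot l q s, rfl⟩
    | left _ hm =>
      rcases move_overProd_cases hm with ⟨a', ha, rfl⟩ | ⟨l', hl, rfl⟩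
      · exact .inl ⟨a', ha, rfl⟩
      · exact .inr ⟨node l' r, .left r hl, rfl⟩
    | right _ hm => exact .inr ⟨_, .right l hm, rfl⟩

lemma exists_of_tle_overProd {x y z : PBT} (hz : tle z (x.overProd y)) :
    ∃ a b, tle a x ∧ tle b y ∧ z = a.overProd b := by
  induction hz with
  | refl => exact ⟨x, y, .refl, .refl, rfl⟩
  | tail _ hm ih =>
    obtain ⟨a, b, ha, hb, rfl⟩ := ih
    rcases move_overProd_cases hm with ⟨a', h', rfl⟩ | ⟨b', h', rfl⟩
    · exact ⟨a', b, ha.tail h', hb, rfl⟩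
    · exact ⟨a, b', ha, hb.tail h', rfl⟩

lemma overProd_inj_of_deg_eq : ∀ {a a' b b' : PBT}, b.deg = b'.deg →
    a.overProd b = a'.overProd b' → a = a' ∧ b = b'
  | _, _, leaf, leaf, _, h => ⟨h, rfl⟩
  | _, _, leaf, node _ _, hd, _ => by simp [deg] at hd
  | _, _, node _ _, leaf, hd, _ => by simp [deg] at hd
  | _, _, node l r, node l' r', hd, h => by
    simp only [overProd, node.injEq] at h
    obtain ⟨h, rfl⟩ := h
    obtain ⟨rfl, rfl⟩ := overProd_inj_of_deg_eq (by simpa [deg] using hd) h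
    exact ⟨rfl, rfl⟩

end PBT

/-- Projective elements are multiplicative for the over product:
`P(x/y) = P(x)/P(y)`. Concretely, `a/b ≤ x/y` whenever `a ≤ x` and `b ≤ y`,
and every `z ≤ x/y` is uniquely of the form `a/b` with `a ≤ x`, `b ≤ y`. -/
theorem stmt17 (x y : PBT) :
    (∀ a b : PBT, PBT.tle a x → PBT.tle b y → PBT.tle (a.overProd b) (x.overProd y)) ∧
    (∀ z : PBT, PBT.tle z (x.overProd y) →
      ∃! p : PBT × PBT, PBT.tle p.1 x ∧ PBT.tle p.2 y ∧ z = p.1.overProd p.2) := by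
  refine ⟨fun a b => PBT.tle.overProd, fun z hz => ?_⟩
  obtain ⟨a, b, ha, hb, rfl⟩ := PBT.exists_of_tle_overProd hz
  refine ⟨(a, b), ⟨ha, hb, rfl⟩, ?_⟩
  rintro ⟨a', b'⟩ ⟨ha', hb', h⟩
  obtain ⟨rfl, rfl⟩ := PBT.overProd_inj_of_deg_eq (hb'.deg_eq.trans hb.deg_eq.symm) h.symm
  rfl
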